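/- arXiv:2206.12851 — 8 statements merged into one kernel-verified Lean document; each statement's English description precedes it below -/
import Mathlib

section
/- For all positive integers Λ, α, j with α ≤ Λ, the sum over i from 1 to α of C(Λ-α, j-i)·C(α-1, i-1)/(i·C(Λ,j)) equals (C(Λ,j) - C(Λ-α,j))/(α·C(Λ,j)), where C(n,k) denotes the binomial coefficient with the convention C(n,k)=0 when k<0 or n<k. -/
/-!
Since `α * C(α-1, i-1) = i * C(α, i)`, the sum equals `(α C(Λ,j))⁻¹ ∑_{1 ≤ i ≤ α} C(Λ-α, j-i) C(α, i)`,
and by Vandermonde's identity this last sum is `C(Λ, j)` minus its missing `i = 0` term `C(Λ-α, j)`.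
-/

/-- Binomial coefficient with integer lower index: vanishes when the lower
index is negative. -/
def chooseZ (n : ℕ) (k : ℤ) : ℕ := if 0 ≤ k then n.choose k.toNat else 0

open Finset

lemma chooseZ_natCast_sub_of_le (n : ℕ) {i j : ℕ} (h : i ≤ j) :
    chooseZ n ((j : ℤ) - i) = n.choose (j - i) := by
  rw [chooseZ, if_pos (by omega)]
  congr 1
  omega

lemma chooseZ_natCast_sub_of_lt (n : ℕ) {i j : ℕ} (h : j < i) :
    chooseZ n ((j : ℤ) - i) = 0 :=
  if_neg (by omega)

lemma sum_range_chooseZ_sub_mul_choose (m a j : ℕ) :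
    ∑ i ∈ range (a + 1), chooseZ m ((j : ℤ) - i) * a.choose i = (m + a).choose j := by
  let f : ℕ → ℕ := fun i ↦ chooseZ m ((j : ℤ) - i) * a.choose i
  have pad_a : ∑ i ∈ range (a + 1 + j), f i = ∑ i ∈ range (a + 1), f i := by
    rw [sum_range_add, add_eq_left]
    refine sum_eq_zero fun k _ ↦ ?_
    simp [f, Nat.choose_eq_zero_of_lt (by omega : a < a + 1 + k)]
  have pad_j : ∑ i ∈ range (j + 1 + a), f i = ∑ i ∈ range (j + 1), f i := by
    rw [sum_range_add, add_eq_left]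
    refine sum_eq_zero fun k _ ↦ ?_
    dsimp only [f]
    rw [chooseZ_natCast_sub_of_lt m (by omega : j < j + 1 + k), zero_mul]
  have to_choose : ∑ i ∈ range (j + 1), f i = ∑ i ∈ range (j + 1), a.choose i * m.choose (j - i) :=
    sum_congr rfl fun i hi ↦ by
      dsimp only [f]
      rw [chooseZ_natCast_sub_of_le m (Nat.lt_succ_iff.1 (mem_range.1 hi)), mul_comm]
  rw [← pad_a, show a + 1 + j = j + 1 + a by omega, pad_j, to_choose, add_comm m, Nat.add_choose_eq,
    Nat.sum_antidiagonal_eq_sum_range_succ (fun k l ↦ a.choose k * m.choose l)]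

lemma choose_add_sum_Icc_chooseZ_sub_mul_choose (m a j : ℕ) :
    m.choose j + ∑ i ∈ Icc 1 a, chooseZ m ((j : ℤ) - i) * a.choose i = (m + a).choose j := by
  rw [← sum_range_chooseZ_sub_mul_choose, Nat.range_succ_eq_Icc_zero,
    ← insert_Icc_add_one_left_eq_Icc (Nat.zero_le a), sum_insert (by simp)]
  simp [chooseZ]

lemma choose_sub_one_div {K : Type*} [Field K] [CharZero K] {n k : ℕ} (hn : 0 < n) (hk : 0 < k) :
    ((n - 1).choose (k - 1) : K) / k = n.choose k / n := by
  obtain ⟨n, rfl⟩ := Nat.exists_eq_add_one_of_ne_zero hn.ne'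
  obtain ⟨k, rfl⟩ := Nat.exists_eq_add_one_of_ne_zero hk.ne'
  rw [div_eq_div_iff (Nat.cast_ne_zero.2 hk.ne') (Nat.cast_ne_zero.2 hn.ne'),
    Nat.add_sub_cancel, Nat.add_sub_cancel]
  exact_mod_cast (mul_comm _ _).trans (Nat.add_one_mul_choose_eq n k)

theorem stmt_0_general (Λ α j : ℕ) (hαΛ : α ≤ Λ) :
    ∑ i ∈ Finset.Icc 1 α,
      ((chooseZ (Λ - α) ((j : ℤ) - i) * Nat.choose (α - 1) (i - 1) : ℚ) /
        (i * Nat.choose Λ j)) =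
      ((Nat.choose Λ j : ℚ) - Nat.choose (Λ - α) j) / (α * Nat.choose Λ j) := by
  have vandermonde := choose_add_sum_Icc_chooseZ_sub_mul_choose (Λ - α) α j
  rw [Nat.sub_add_cancel hαΛ] at vandermonde
  have hsum : ∑ i ∈ Icc 1 α, (chooseZ (Λ - α) ((j : ℤ) - i) * α.choose i : ℚ) =
      Λ.choose j - (Λ - α).choose j := by
    rw [eq_sub_iff_add_eq']
    exact_mod_cast vandermonde
  calc _ = ∑ i ∈ Icc 1 α,
        (chooseZ (Λ - α) ((j : ℤ) - i) * α.choose i : ℚ) / (α * Λ.choose j) := by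
        refine sum_congr rfl fun i hi ↦ ?_
        obtain ⟨hi, hiα⟩ := mem_Icc.1 hi
        rw [mul_comm (i : ℚ), mul_comm (α : ℚ), ← div_mul_div_comm, ← div_mul_div_comm,
          choose_sub_one_div (by omega) hi]
    _ = _ := by rw [← sum_div, hsum]

theorem stmt_0 (Λ α j : ℕ) (hΛ : 0 < Λ) (hα : 0 < α) (hj : 0 < j) (hαΛ : α ≤ Λ) :
    ∑ i ∈ Finset.Icc 1 α,
      ((chooseZ (Λ - α) ((j : ℤ) - i) * Nat.choose (α - 1) (i - 1) : ℚ) /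
        (i * Nat.choose Λ j)) =
      ((Nat.choose Λ j : ℚ) - Nat.choose (Λ - α) j) / (α * Nat.choose Λ j) :=
  stmt_0_general Λ α j hαΛ
end

section
/- Define s(α) = C(Λ-α, r) / (C(Λ,r) · (C(r+α, r) - 1)) for positive integers Λ, α, r with r ≤ Λ - α - 1 and 1 ≤ α ≤ Λ - 1. Then s(α) > s(α+1); i.e., for fixed computation load r, the achievable communication load strictly decreases as the multi-access degree α increases. -/
theorem stmt_2 (Λ α r : ℕ) (hr : 1 ≤ r) (hα : 1 ≤ α) (hαΛ : α ≤ Λ - 1)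
    (hrΛ : r ≤ Λ - α - 1) :
    (Nat.choose (Λ - α) r : ℚ) /
        (Nat.choose Λ r * ((Nat.choose (r + α) r : ℚ) - 1)) >
      (Nat.choose (Λ - (α + 1)) r : ℚ) /
        (Nat.choose Λ r * ((Nat.choose (r + (α + 1)) r : ℚ) - 1)) := by
  have hm : Λ - α = (Λ - (α + 1)) + 1 := by omega
  have hr' : r = (r - 1) + 1 := by omega
  -- numerator strict decrease
  have hnum : Nat.choose (Λ - (α + 1)) r < Nat.choose (Λ - α) r := by
    rw [hm, hr', Nat.choose_succ_succ]
    simp only [Nat.succ_eq_add_one]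
    have : 0 < Nat.choose (Λ - (α + 1)) (r - 1) :=
      Nat.choose_pos (by omega)
    omega
  -- denominator facts
  have hden1 : 1 < Nat.choose (r + α) r := by
    calc 1 < r + 1 := by omega
    _ = Nat.choose (r + 1) r := by
        rw [← Nat.choose_symm (by omega : r ≤ r + 1)]
        simp
    _ ≤ Nat.choose (r + α) r := Nat.choose_le_choose r (by omega)
  have hden2 : Nat.choose (r + α) r < Nat.choose (r + (α + 1)) r := by
    have : r + (α + 1) = (r + α) + 1 := by omega
    rw [this, hr', Nat.choose_succ_succ]
    simp only [Nat.succ_eq_add_one]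
    have h1 : 0 < Nat.choose (r - 1 + 1 + α) (r - 1) := Nat.choose_pos (by omega)
    omega
  have hΛ : 0 < Nat.choose Λ r := Nat.choose_pos (by omega)
  -- cast to ℚ
  have hnumpos : (0 : ℚ) < Nat.choose (Λ - (α + 1)) r := by
    exact_mod_cast Nat.choose_pos (show r ≤ Λ - (α + 1) by omega)
  have hnumq : (Nat.choose (Λ - (α + 1)) r : ℚ) < Nat.choose (Λ - α) r := by
    exact_mod_cast hnum
  have hd1 : (0 : ℚ) < (Nat.choose Λ r : ℚ) * ((Nat.choose (r + α) r : ℚ) - 1) := by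
    apply mul_pos
    · exact_mod_cast hΛ
    · have : (1 : ℚ) < Nat.choose (r + α) r := by exact_mod_cast hden1
      linarith
  have hd2 : (0 : ℚ) < (Nat.choose Λ r : ℚ) * ((Nat.choose (r + (α + 1)) r : ℚ) - 1) := by
    apply mul_pos
    · exact_mod_cast hΛ
    · have : (1 : ℚ) < Nat.choose (r + (α + 1)) r := by
        exact_mod_cast lt_trans hden1 hden2
      linarith
  have hdle : (Nat.choose Λ r : ℚ) * ((Nat.choose (r + α) r : ℚ) - 1) ≤
      (Nat.choose Λ r : ℚ) * ((Nat.choose (r + (α + 1)) r : ℚ) - 1) := by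
    apply mul_le_mul_of_nonneg_left
    · have : (Nat.choose (r + α) r : ℚ) ≤ Nat.choose (r + (α + 1)) r := by
        exact_mod_cast hden2.le
      linarith
    · positivity
  exact div_lt_div₀ hnumq hdle (by positivity) hd1
end

section
/- For positive integers Λ, α, r with 2 ≤ α and r ≤ Λ - α + 1, the ratio of L_UB(r) = C(Λ-α,r)/(C(Λ,r)·(C(r+α,r)-1)) to L_LB(r) = C(Λ, r+α)/(C(Λ,α)·C(Λ,r)) is at most 3/2. -/
/-!
By the subset-of-a-subset identity `C(Λ, r+α) C(r+α, r) = C(Λ, α) C(Λ-α, r)`, the ratio collapses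
to `n / (n - 1)` with `n = C(r+α, r)`. Since `α ≥ 2`, either `r = 0` (so `n = 1` and the ratio is
`0` by division by zero) or `n ≥ C(r+2, 2) ≥ 3`, and then `n / (n - 1) ≤ 3 / 2`.
-/

theorem Nat.choose_add_mul_choose_left (n a r : ℕ) :
    n.choose (r + a) * (r + a).choose r = n.choose a * (n - a).choose r := by
  rw [Nat.choose_symm_add, Nat.choose_mul (Nat.le_add_left a r), Nat.add_sub_cancel]

theorem Nat.choose_add_ne_two {a : ℕ} (ha : 2 ≤ a) (r : ℕ) : (r + a).choose r ≠ 2 := by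
  rcases Nat.eq_zero_or_pos r with rfl | hr
  · simp
  have h3 : 3 ≤ (r + 2).choose 2 := by
    calc 3 = (1 + 2).choose 2 := rfl
      _ ≤ (r + 2).choose 2 := Nat.choose_le_choose 2 (by omega)
  have hmono : (r + 2).choose r ≤ (r + a).choose r := Nat.choose_le_choose r (by omega)
  rw [Nat.choose_symm_add] at hmono
  omega

theorem Nat.cast_div_cast_sub_one_le_three_halves {n : ℕ} (hn : n ≠ 2) :
    (n : ℚ) / (n - 1) ≤ 3 / 2 := by
  rcases Nat.lt_or_ge n 2 with hlt | hge
  · interval_cases n <;> norm_num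
  have h3 : (3 : ℚ) ≤ n := by exact_mod_cast (show 3 ≤ n by omega)
  rw [div_le_div_iff₀ (by linarith) (by norm_num)]
  linarith

theorem div_mul_sub_one_div_div_mul_eq {K : Type*} [Field K] {a b c d n : K}
    (hb : b ≠ 0) (hc : c ≠ 0) (h : c * n = d * a) :
    a / (b * (n - 1)) / (c / (d * b)) = n / (n - 1) := by
  rcases eq_or_ne (n - 1) 0 with hn | hn
  · simp [hn]
  rw [div_div_div_eq, div_eq_div_iff (by simp [hb, hc, hn]) hn]
  linear_combination b * (n - 1) * h.symm

theorem stmt_3_general (Λ α r : ℕ) (hα : 2 ≤ α) :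
    ((Nat.choose (Λ - α) r : ℚ) /
        (Nat.choose Λ r * ((Nat.choose (r + α) r : ℚ) - 1))) /
      ((Nat.choose Λ (r + α) : ℚ) / (Nat.choose Λ α * Nat.choose Λ r)) ≤ 3 / 2 := by
  rcases eq_or_ne (Nat.choose Λ r : ℚ) 0 with hb | hb
  · norm_num [hb]
  rcases eq_or_ne (Nat.choose Λ (r + α) : ℚ) 0 with hc | hc
  · norm_num [hc]
  have hid := Nat.choose_add_mul_choose_left Λ α r
  rw [div_mul_sub_one_div_div_mul_eq hb hc (by exact_mod_cast hid)]
  exact Nat.cast_div_cast_sub_one_le_three_halves (Nat.choose_add_ne_two hα r)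

theorem stmt_3 (Λ α r : ℕ) (hΛ : 0 < Λ) (hr : 0 < r) (hα : 2 ≤ α)
    (hrΛ : r ≤ Λ - α + 1) :
    ((Nat.choose (Λ - α) r : ℚ) /
        (Nat.choose Λ r * ((Nat.choose (r + α) r : ℚ) - 1))) /
      ((Nat.choose Λ (r + α) : ℚ) / (Nat.choose Λ α * Nat.choose Λ r)) ≤ 3 / 2 :=
  stmt_3_general Λ α r hα
end

section
/- For nonnegative integers Λ and α with α ≤ Λ, the function f(j) = C(Λ, α+j)/C(Λ, j) is midpoint convex on integers j ∈ [0, Λ-α]: for all j with j+2 ≤ Λ-α, f(j) + f(j+2) ≥ 2·f(j+1). -/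
set_option maxHeartbeats 800000

lemma key_aux (a j m : ℚ) (h1 : a = 0 ∨ 1 ≤ a) (hj : 0 ≤ j) (hm : 0 ≤ m) :
    2 * (j + 1) * (m + 2) * (a + m + 1) * (a + j + 2) ≤
      (a + j + 1) * (a + m + 1) * (a + j + 2) * (a + m + 2) +
        (m + 1) * (j + 1) * (m + 2) * (j + 2) := by
  rcases h1 with h | h
  · subst h; nlinarith [sq_nonneg j, sq_nonneg m]
  · have ha : 0 ≤ a := le_trans zero_le_one h
    have hX : 0 ≤ a * (j + m) + (m - j) := by nlinarith [mul_nonneg (sub_nonneg.2 h) (add_nonneg hj hm)]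
    have t1 : 0 ≤ a * (j + m + 3) * (a * (j + m) + (m - j)) :=
      mul_nonneg (mul_nonneg ha (by linarith)) hX
    have t2 : 0 ≤ a ^ 2 * (2 * j + 4 * m + 9) := by positivity
    have t3 : 0 ≤ a ^ 3 * (2 * j + 2 * m + 6) := by positivity
    have t4 : 0 ≤ a ^ 4 := by positivity
    nlinarith [t1, t2, t3, t4]

theorem stmt_8 (Λ α j : ℕ) (hαΛ : α ≤ Λ) (hj : j + 2 ≤ Λ - α) :
    (Nat.choose Λ (α + j) : ℚ) / Nat.choose Λ j +
        (Nat.choose Λ (α + (j + 2)) : ℚ) / Nat.choose Λ (j + 2) ≥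
      2 * ((Nat.choose Λ (α + (j + 1)) : ℚ) / Nat.choose Λ (j + 1)) := by
  obtain ⟨m, rfl⟩ : ∃ m, Λ = α + j + 2 + m := ⟨Λ - α - (j + 2), by omega⟩
  rw [show α + (j + 2) = α + j + 2 from by ring, show α + (j + 1) = α + j + 1 from by ring]
  -- nat relations
  have r1 : (α + j + 2 + m).choose (j + 1) * (j + 1) = (α + j + 2 + m).choose j * (α + m + 2) := by
    have h := Nat.choose_succ_right_eq (α + j + 2 + m) j
    rwa [show α + j + 2 + m - j = α + m + 2 by omega] at h
  have r2 : (α + j + 2 + m).choose (j + 2) * (j + 2) = (α + j + 2 + m).choose (j + 1) * (α + m + 1) := by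
    have h := Nat.choose_succ_right_eq (α + j + 2 + m) (j + 1)
    rwa [show α + j + 2 + m - (j + 1) = α + m + 1 by omega] at h
  have r3 : (α + j + 2 + m).choose (α + j + 1) * (α + j + 1) = (α + j + 2 + m).choose (α + j) * (m + 2) := by
    have h := Nat.choose_succ_right_eq (α + j + 2 + m) (α + j)
    rwa [show α + j + 2 + m - (α + j) = m + 2 by omega] at h
  have r4 : (α + j + 2 + m).choose (α + j + 2) * (α + j + 2) = (α + j + 2 + m).choose (α + j + 1) * (m + 1) := by
    have h := Nat.choose_succ_right_eq (α + j + 2 + m) (α + j + 1)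
    rwa [show α + j + 2 + m - (α + j + 1) = m + 1 by omega] at h
  have p0 : 0 < ((α + j + 2 + m).choose j : ℚ) := by exact_mod_cast Nat.choose_pos (by omega)
  have p1 : 0 < ((α + j + 2 + m).choose (j + 1) : ℚ) := by exact_mod_cast Nat.choose_pos (by omega)
  have p2 : 0 < ((α + j + 2 + m).choose (j + 2) : ℚ) := by exact_mod_cast Nat.choose_pos (by omega)
  have q1 : 0 < ((α + j + 2 + m).choose (α + j + 1) : ℚ) := by exact_mod_cast Nat.choose_pos (by omega)
  have c1 : ((α + j + 2 + m).choose (j + 1) : ℚ) * (j + 1) = (α + j + 2 + m).choose j * (α + m + 2) := by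
    exact_mod_cast congrArg (Nat.cast : ℕ → ℚ) r1
  have c2 : ((α + j + 2 + m).choose (j + 2) : ℚ) * (j + 2) = (α + j + 2 + m).choose (j + 1) * (α + m + 1) := by
    exact_mod_cast congrArg (Nat.cast : ℕ → ℚ) r2
  have c3 : ((α + j + 2 + m).choose (α + j + 1) : ℚ) * (α + j + 1) = (α + j + 2 + m).choose (α + j) * (m + 2) := by
    exact_mod_cast congrArg (Nat.cast : ℕ → ℚ) r3
  have c4 : ((α + j + 2 + m).choose (α + j + 2) : ℚ) * (α + j + 2) = (α + j + 2 + m).choose (α + j + 1) * (m + 1) := by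
    exact_mod_cast congrArg (Nat.cast : ℕ → ℚ) r4
  have eb0 : ((α + j + 2 + m).choose (α + j) : ℚ) =
      (α + j + 2 + m).choose (α + j + 1) * ((α : ℚ) + j + 1) / (m + 2) := by
    rw [eq_div_iff (by positivity)]; push_cast at c3 ⊢; linarith
  have eb2 : ((α + j + 2 + m).choose (α + j + 2) : ℚ) =
      (α + j + 2 + m).choose (α + j + 1) * ((m : ℚ) + 1) / ((α : ℚ) + j + 2) := by
    rw [eq_div_iff (by positivity)]; push_cast at c4 ⊢; linarith
  have ec0 : ((α + j + 2 + m).choose j : ℚ) =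
      (α + j + 2 + m).choose (j + 1) * ((j : ℚ) + 1) / ((α : ℚ) + m + 2) := by
    rw [eq_div_iff (by positivity)]; push_cast at c1 ⊢; linarith
  have ec2 : ((α + j + 2 + m).choose (j + 2) : ℚ) =
      (α + j + 2 + m).choose (j + 1) * ((α : ℚ) + m + 1) / ((j : ℚ) + 2) := by
    rw [eq_div_iff (by positivity)]; push_cast at c2 ⊢; linarith
  rw [eb0, eb2, ec0, ec2]
  have hbr : (2 : ℚ) ≤
      (((α : ℚ) + j + 1) * ((α : ℚ) + m + 2)) / (((m : ℚ) + 2) * ((j : ℚ) + 1)) +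
        (((m : ℚ) + 1) * ((j : ℚ) + 2)) / ((((α : ℚ) + j + 2)) * ((α : ℚ) + m + 1)) := by
    rw [div_add_div _ _ (by positivity) (by positivity), le_div_iff₀ (by positivity)]
    have hk := key_aux (α : ℚ) (j : ℚ) (m : ℚ)
      (by rcases Nat.eq_zero_or_pos α with h | h
          · left; exact_mod_cast h
          · right; exact_mod_cast h)
      (by positivity) (by positivity)
    nlinarith [hk]
  set Q : ℚ := ((α + j + 2 + m).choose (α + j + 1) : ℚ) with hQ
  set C : ℚ := ((α + j + 2 + m).choose (j + 1) : ℚ) with hC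
  have hsum : Q * ((α : ℚ) + j + 1) / (m + 2) / (C * ((j : ℚ) + 1) / ((α : ℚ) + m + 2)) +
      Q * ((m : ℚ) + 1) / ((α : ℚ) + j + 2) / (C * ((α : ℚ) + m + 1) / ((j : ℚ) + 2)) =
      (Q / C) * ((((α : ℚ) + j + 1) * ((α : ℚ) + m + 2)) / (((m : ℚ) + 2) * ((j : ℚ) + 1)) +
        (((m : ℚ) + 1) * ((j : ℚ) + 2)) / ((((α : ℚ) + j + 2)) * ((α : ℚ) + m + 1))) := by
    field_simp
  rw [hsum]
  have hpos : 0 < Q / C := div_pos q1 p1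
  calc 2 * (Q / C) = (Q / C) * 2 := by ring
    _ ≤ (Q / C) * _ := mul_le_mul_of_nonneg_left hbr hpos.le
end

section
/- For positive integers Λ, α, j with α ≤ Λ and 1 ≤ j ≤ Λ - α: C(Λ-α, j)/(C(Λ,j)·(C(j+α,j)-1)) · (C(Λ,α)·C(Λ,j))/C(Λ, α+j) ≤ (α+1)/α. -/
/-!
By `C(Λ, α + j) · C(j + α, j) = C(Λ, α) · C(Λ - α, j)` the product collapses to `B / (B - 1)`
with `B = C(j + α, j)`. Since `j ≥ 1` we have `B ≥ C(α + 1, α) = α + 1`, and `t ↦ t / (t - 1)`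
is decreasing for `t > 1`.
-/

theorem Nat.choose_add_mul_choose_add (n a b : ℕ) :
    n.choose (a + b) * (b + a).choose b = n.choose a * (n - a).choose b := by
  rw [Nat.add_comm b a, ← Nat.choose_symm_add, Nat.choose_mul (Nat.le_add_right a b),
    Nat.add_sub_cancel_left]

theorem Nat.succ_le_choose_add (a : ℕ) {b : ℕ} (hb : 1 ≤ b) : a + 1 ≤ (b + a).choose b :=
  calc a + 1 = (a + 1).choose a := (Nat.choose_succ_self_right a).symm
    _ ≤ (b + a).choose a := Nat.choose_le_choose a (by omega)
    _ = (b + a).choose b := Nat.choose_symm_add.symm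

theorem div_sub_one_le_add_one_div {K : Type*} [Field K] [LinearOrder K] [IsStrictOrderedRing K]
    {a x : K} (ha : 0 < a) (hx : a + 1 ≤ x) : x / (x - 1) ≤ (a + 1) / a := by
  rw [div_le_div_iff₀ (by linarith) ha]
  linarith

theorem stmt_12_general (Λ α j : ℕ) (hα : 0 < α) (hj : 1 ≤ j)
    (hjΛ : j ≤ Λ - α) :
    (Nat.choose (Λ - α) j : ℚ) /
        (Nat.choose Λ j * ((Nat.choose (j + α) j : ℚ) - 1)) *
      ((Nat.choose Λ α * Nat.choose Λ j : ℚ) / Nat.choose Λ (α + j)) ≤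
      ((α : ℚ) + 1) / α := by
  have hα' : (0 : ℚ) < α := by exact_mod_cast hα
  have hB : (α : ℚ) + 1 ≤ (j + α).choose j := by exact_mod_cast Nat.succ_le_choose_add α hj
  have hA : (0 : ℚ) < Λ.choose j := by exact_mod_cast Nat.choose_pos (by omega)
  have hD : (0 : ℚ) < Λ.choose (α + j) := by exact_mod_cast Nat.choose_pos (by omega)
  have hid : (Λ.choose (α + j) * (j + α).choose j : ℚ) = Λ.choose α * (Λ - α).choose j := by
    exact_mod_cast Nat.choose_add_mul_choose_add Λ α j
  calc _ = ((j + α).choose j : ℚ) / ((j + α).choose j - 1) := by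
        have hB1 : (0 : ℚ) < (j + α).choose j - 1 := by linarith
        rw [div_mul_div_comm, div_eq_div_iff (by positivity) hB1.ne']
        linear_combination (-(Λ.choose j : ℚ) * ((j + α).choose j - 1)) * hid
    _ ≤ _ := div_sub_one_le_add_one_div hα' hB

theorem stmt_12 (Λ α j : ℕ) (hα : 0 < α) (hj : 1 ≤ j) (hαΛ : α ≤ Λ)
    (hjΛ : j ≤ Λ - α) :
    (Nat.choose (Λ - α) j : ℚ) /
        (Nat.choose Λ j * ((Nat.choose (j + α) j : ℚ) - 1)) *
      ((Nat.choose Λ α * Nat.choose Λ j : ℚ) / Nat.choose Λ (α + j)) ≤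
      ((α : ℚ) + 1) / α :=
  stmt_12_general Λ α j hα hj hjΛ
end

section
/- Let Λ, α be positive integers with α ≤ Λ. For each j ∈ [1, Λ] define c(j) = C(Λ-α,j)/(C(Λ,j)·(C(j+α,j)-1)) + (C(Λ,α)-C(Λ-j,α))/(α·C(Λ,α)) and d(j) = C(Λ,α+j)/(C(Λ,α)·C(Λ,j)) + (C(Λ,α)-C(Λ-j,α))/(α·C(Λ,α)), with the convention that binomial coefficients vanish when the lower index exceeds the upper index or is negative. Then for every j ∈ [1, Λ], c(j) ≤ 2·d(j). -/
/-!
Splitting the `α + j` chosen elements into `α` and `j` gives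
`C(Λ, α + j) · C(α + j, j) = C(Λ, α) · C(Λ - α, j)` (both sides vanish when `α + j > Λ`), so the first summand of `c(j)` is the first
summand of `d(j)` times `N / (N - 1)` with `N = C(j + α, j) ≥ 2`, and `N / (N - 1) ≤ 2`.
The common second summand is nonnegative.
-/

theorem Nat.choose_add_mul_choose (n a j : ℕ) :
    n.choose (a + j) * (a + j).choose j = n.choose a * (n - a).choose j := by
  rw [← Nat.choose_symm_add, Nat.choose_mul (Nat.le_add_right a j), Nat.add_sub_cancel_left]

theorem Nat.two_le_choose_add {j a : ℕ} (hj : 1 ≤ j) (ha : 1 ≤ a) : 2 ≤ (j + a).choose j :=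
  calc 2 ≤ j + 1 := by omega
    _ = (j + 1).choose j := (Nat.choose_succ_self_right j).symm
    _ ≤ (j + a).choose j := Nat.choose_le_choose j (by omega)

section

variable {K : Type*} [Field K] [LinearOrder K] [IsStrictOrderedRing K]

theorem mul_div_sub_one_le_two_mul {x N : K} (hx : 0 ≤ x) (hN : 2 ≤ N) :
    x * N / (N - 1) ≤ 2 * x := by
  rw [div_le_iff₀ (by linarith)]
  nlinarith

theorem choose_sub_div_le_two_mul_choose_add_div {Λ α j : ℕ} (hα : 0 < α) (hαΛ : α ≤ Λ)
    (hj : 1 ≤ j) :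
    ((Λ - α).choose j : K) / (Λ.choose j * (((j + α).choose j : K) - 1)) ≤
      2 * ((Λ.choose (α + j) : K) / (Λ.choose α * Λ.choose j)) := by
  have hN : (2 : K) ≤ (j + α).choose j := by exact_mod_cast Nat.two_le_choose_add hj hα
  have hCΛα : (Λ.choose α : K) ≠ 0 := by exact_mod_cast (Nat.choose_pos hαΛ).ne'
  have hsplit : ((Λ - α).choose j : K) = Λ.choose (α + j) * (j + α).choose j / Λ.choose α := by
    rw [eq_div_iff hCΛα, mul_comm, add_comm j α]
    exact_mod_cast (Nat.choose_add_mul_choose Λ α j).symm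
  have hrewrite : ((Λ - α).choose j : K) / (Λ.choose j * (((j + α).choose j : K) - 1)) =
      (Λ.choose (α + j) : K) / (Λ.choose α * Λ.choose j) * (j + α).choose j /
        (((j + α).choose j : K) - 1) := by
    simp only [hsplit, div_eq_mul_inv, mul_inv]
    ring
  rw [hrewrite]
  exact mul_div_sub_one_le_two_mul (by positivity) hN

end

theorem stmt_13_general (Λ α : ℕ) (hα : 0 < α) (hαΛ : α ≤ Λ) :
    ∀ j ∈ Finset.Icc 1 Λ,
      (Nat.choose (Λ - α) j : ℚ) /
          (Nat.choose Λ j * ((Nat.choose (j + α) j : ℚ) - 1)) +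
        ((Nat.choose Λ α : ℚ) - Nat.choose (Λ - j) α) / (α * Nat.choose Λ α) ≤
      2 * ((Nat.choose Λ (α + j) : ℚ) / (Nat.choose Λ α * Nat.choose Λ j) +
        ((Nat.choose Λ α : ℚ) - Nat.choose (Λ - j) α) / (α * Nat.choose Λ α)) := by
  intro j hj
  have hfirst := choose_sub_div_le_two_mul_choose_add_div (K := ℚ) hα hαΛ (Finset.mem_Icc.mp hj).1
  have hsecond : 0 ≤ ((Nat.choose Λ α : ℚ) - Nat.choose (Λ - j) α) / (α * Nat.choose Λ α) :=
    div_nonneg (sub_nonneg.2 (by exact_mod_cast Nat.choose_le_choose α (Nat.sub_le Λ j)))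
      (by positivity)
  linarith

theorem stmt_13 (Λ α : ℕ) (hΛ : 0 < Λ) (hα : 0 < α) (hαΛ : α ≤ Λ) :
    ∀ j ∈ Finset.Icc 1 Λ,
      (Nat.choose (Λ - α) j : ℚ) /
          (Nat.choose Λ j * ((Nat.choose (j + α) j : ℚ) - 1)) +
        ((Nat.choose Λ α : ℚ) - Nat.choose (Λ - j) α) / (α * Nat.choose Λ α) ≤
      2 * ((Nat.choose Λ (α + j) : ℚ) / (Nat.choose Λ α * Nat.choose Λ j) +
        ((Nat.choose Λ α : ℚ) - Nat.choose (Λ - j) α) / (α * Nat.choose Λ α)) :=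
  stmt_13_general Λ α hα hαΛ
end

section
/- Let Λ, α be positive integers with α ≤ Λ, and let a : [1..Λ] → ℚ with a(j) ≥ 0 for all j and Σ_j a(j) = 1. With c(j) and d(j) as in the max-link gap analysis (c(j) = C(Λ-α,j)/(C(Λ,j)(C(j+α,j)-1)) + (C(Λ,α)-C(Λ-j,α))/(α C(Λ,α)), d(j) = C(Λ,α+j)/(C(Λ,α) C(Λ,j)) + (C(Λ,α)-C(Λ-j,α))/(α C(Λ,α))), we have Σ_j c(j)·a(j) ≤ 2·Σ_j d(j)·a(j). Consequently max(L, J) ≤ Σ_j c(j) a(j) ≤ 4·( (1/2)·Σ_j d(j) a(j) ), i.e., the achievable max-link load is within a factor 4 of the lower bound. -/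
/-!
Pointwise, `c j` is the sum of the nonnegative load term `L j` and download term `J j`, and
`d j` shares the download term. Writing `B = C(j+α, j) ≥ 2`, the identity
`C(Λ, α+j) · B = C(Λ, α) · C(Λ-α, j)` turns the load term into `B / (B - 1) ≤ 2` times the
first term of `d j`. Hence `c j ≤ 2 d j`, and `max (∑ L a) (∑ J a) ≤ ∑ c a` by nonnegativity.
-/

open Finset

namespace Nat

theorem choose_add_mul_choose_add_left (Λ α j : ℕ) :
    Λ.choose (α + j) * (j + α).choose j = Λ.choose α * (Λ - α).choose j := by
  rw [add_comm j α, ← choose_symm_add, choose_mul (Nat.le_add_right α j),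
    Nat.add_sub_cancel_left]

theorem two_le_choose_add_left {j α : ℕ} (hj : 1 ≤ j) (hα : 0 < α) :
    2 ≤ (j + α).choose j :=
  calc 2 ≤ j + 1 := by omega
    _ = (j + 1).choose j := (choose_succ_self_right j).symm
    _ ≤ (j + α).choose j := choose_le_choose j (by omega)

end Nat

theorem download_term_nonneg (Λ α j : ℕ) :
    0 ≤ ((Λ.choose α : ℚ) - (Λ - j).choose α) / (α * Λ.choose α) := by
  have h : ((Λ - j).choose α : ℚ) ≤ Λ.choose α := by
    exact_mod_cast Nat.choose_le_choose α (Nat.sub_le Λ j)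
  exact div_nonneg (sub_nonneg.mpr h) (by positivity)

theorem load_term_nonneg {Λ α j : ℕ} (hj : 1 ≤ j) (hα : 0 < α) :
    0 ≤ ((Λ - α).choose j : ℚ) / (Λ.choose j * (((j + α).choose j : ℚ) - 1)) := by
  have hB : (2 : ℚ) ≤ (j + α).choose j := by exact_mod_cast Nat.two_le_choose_add_left hj hα
  have : (0 : ℚ) ≤ ((j + α).choose j : ℚ) - 1 := by linarith
  positivity

theorem load_term_le_two_mul {Λ α j : ℕ} (hj : 1 ≤ j) (hjΛ : j ≤ Λ) (hα : 0 < α)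
    (hαΛ : α ≤ Λ) :
    ((Λ - α).choose j : ℚ) / (Λ.choose j * (((j + α).choose j : ℚ) - 1)) ≤
      2 * ((Λ.choose (α + j) : ℚ) / (Λ.choose α * Λ.choose j)) := by
  have hP : (0 : ℚ) < Λ.choose j := by exact_mod_cast Nat.choose_pos hjΛ
  have hQ : (0 : ℚ) < Λ.choose α := by exact_mod_cast Nat.choose_pos hαΛ
  have hB : (2 : ℚ) ≤ (j + α).choose j := by exact_mod_cast Nat.two_le_choose_add_left hj hα
  have hEB : (Λ.choose (α + j) : ℚ) * (j + α).choose j = Λ.choose α * (Λ - α).choose j := by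
    exact_mod_cast Nat.choose_add_mul_choose_add_left Λ α j
  set A : ℚ := ↑((Λ - α).choose j)
  set B : ℚ := ↑((j + α).choose j)
  set E : ℚ := ↑(Λ.choose (α + j))
  set P : ℚ := ↑(Λ.choose j)
  set Q : ℚ := ↑(Λ.choose α)
  have hEP : 0 ≤ E * P := by positivity
  rw [mul_div_assoc', div_le_div_iff₀ (mul_pos hP (by linarith)) (by positivity)]
  calc A * (Q * P) = E * P * B := by linear_combination (-P) * hEB
    _ ≤ E * P * (2 * (B - 1)) := mul_le_mul_of_nonneg_left (by linarith) hEP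
    _ = 2 * E * (P * (B - 1)) := by ring

theorem stmt_14_general (Λ α : ℕ) (hα : 0 < α) (hαΛ : α ≤ Λ)
    (a : ℕ → ℚ) (ha_nonneg : ∀ j ∈ Finset.Icc 1 Λ, 0 ≤ a j)
    (c d L J : ℕ → ℚ)
    (hc : ∀ j, c j = (Nat.choose (Λ - α) j : ℚ) /
          (Nat.choose Λ j * ((Nat.choose (j + α) j : ℚ) - 1)) +
        ((Nat.choose Λ α : ℚ) - Nat.choose (Λ - j) α) / (α * Nat.choose Λ α))
    (hd : ∀ j, d j = (Nat.choose Λ (α + j) : ℚ) /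
          (Nat.choose Λ α * Nat.choose Λ j) +
        ((Nat.choose Λ α : ℚ) - Nat.choose (Λ - j) α) / (α * Nat.choose Λ α))
    (hL : ∀ j, L j = (Nat.choose (Λ - α) j : ℚ) /
          (Nat.choose Λ j * ((Nat.choose (j + α) j : ℚ) - 1)))
    (hJ : ∀ j, J j = ((Nat.choose Λ α : ℚ) - Nat.choose (Λ - j) α) /
          (α * Nat.choose Λ α)) :
    (∑ j ∈ Finset.Icc 1 Λ, c j * a j ≤ 2 * ∑ j ∈ Finset.Icc 1 Λ, d j * a j) ∧
      max (∑ j ∈ Finset.Icc 1 Λ, L j * a j) (∑ j ∈ Finset.Icc 1 Λ, J j * a j) ≤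
        4 * ((1 / 2) * ∑ j ∈ Finset.Icc 1 Λ, d j * a j) := by
  have hc_le : ∀ j ∈ Icc 1 Λ, c j * a j ≤ 2 * (d j * a j) := fun j hj => by
    obtain ⟨hj, hjΛ⟩ := mem_Icc.mp hj
    have h := load_term_le_two_mul (Λ := Λ) hj hjΛ hα hαΛ
    have hJ0 := download_term_nonneg Λ α j
    rw [← mul_assoc, hc, hd]
    exact mul_le_mul_of_nonneg_right (by linarith) (ha_nonneg j (mem_Icc.mpr ⟨hj, hjΛ⟩))
  have hcd : ∑ j ∈ Icc 1 Λ, c j * a j ≤ 2 * ∑ j ∈ Icc 1 Λ, d j * a j := by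
    rw [mul_sum]; exact sum_le_sum hc_le
  have hcLJ : ∑ j ∈ Icc 1 Λ, c j * a j =
      ∑ j ∈ Icc 1 Λ, L j * a j + ∑ j ∈ Icc 1 Λ, J j * a j := by
    rw [← sum_add_distrib]; exact sum_congr rfl fun j _ => by rw [hc, hL, hJ]; ring
  have hL0 : 0 ≤ ∑ j ∈ Icc 1 Λ, L j * a j := sum_nonneg fun j hj => by
    rw [hL]; exact mul_nonneg (load_term_nonneg (mem_Icc.mp hj).1 hα) (ha_nonneg j hj)
  have hJ0 : 0 ≤ ∑ j ∈ Icc 1 Λ, J j * a j := sum_nonneg fun j hj => by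
    rw [hJ]; exact mul_nonneg (download_term_nonneg Λ α j) (ha_nonneg j hj)
  refine ⟨hcd, ?_⟩
  calc _ ≤ ∑ j ∈ Icc 1 Λ, L j * a j + ∑ j ∈ Icc 1 Λ, J j * a j := max_le_add_of_nonneg hL0 hJ0
    _ ≤ 2 * ∑ j ∈ Icc 1 Λ, d j * a j := hcLJ ▸ hcd
    _ = _ := by ring

theorem stmt_14 (Λ α : ℕ) (hΛ : 0 < Λ) (hα : 0 < α) (hαΛ : α ≤ Λ)
    (a : ℕ → ℚ) (ha_nonneg : ∀ j ∈ Finset.Icc 1 Λ, 0 ≤ a j)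
    (ha_sum : ∑ j ∈ Finset.Icc 1 Λ, a j = 1)
    (c d L J : ℕ → ℚ)
    (hc : ∀ j, c j = (Nat.choose (Λ - α) j : ℚ) /
          (Nat.choose Λ j * ((Nat.choose (j + α) j : ℚ) - 1)) +
        ((Nat.choose Λ α : ℚ) - Nat.choose (Λ - j) α) / (α * Nat.choose Λ α))
    (hd : ∀ j, d j = (Nat.choose Λ (α + j) : ℚ) /
          (Nat.choose Λ α * Nat.choose Λ j) +
        ((Nat.choose Λ α : ℚ) - Nat.choose (Λ - j) α) / (α * Nat.choose Λ α))
    (hL : ∀ j, L j = (Nat.choose (Λ - α) j : ℚ) /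
          (Nat.choose Λ j * ((Nat.choose (j + α) j : ℚ) - 1)))
    (hJ : ∀ j, J j = ((Nat.choose Λ α : ℚ) - Nat.choose (Λ - j) α) /
          (α * Nat.choose Λ α)) :
    (∑ j ∈ Finset.Icc 1 Λ, c j * a j ≤ 2 * ∑ j ∈ Finset.Icc 1 Λ, d j * a j) ∧
      max (∑ j ∈ Finset.Icc 1 Λ, L j * a j) (∑ j ∈ Finset.Icc 1 Λ, J j * a j) ≤
        4 * ((1 / 2) * ∑ j ∈ Finset.Icc 1 Λ, d j * a j) :=
  stmt_14_general Λ α hα hαΛ a ha_nonneg c d L J hc hd hL hJ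
end

section
/- Fix integers Λ ≥ 1 and α with 1 ≤ α ≤ Λ, a j-subset T of [Λ], and an α-subset U of [Λ] with U ∩ T = ∅. Then, summed over i ∈ [α, Λ], the total count of pairs (c, i), where c = (c₁,…,c_Λ) is a permutation of [Λ], with U ⊆ {c₁,…,c_i}, c_i ∈ U, and T ∩ {c₁,…,c_i} = ∅ equals α!·j!·(Λ-α-j)!·C(Λ, α+j). -/
open Finset Equiv

lemma downset_iff {m α : ℕ} {A : Finset (Fin m)} (hcard : A.card = α)
    (hdc : ∀ k ∈ A, ∀ l : Fin m, l ≤ k → l ∈ A) (k : Fin m) :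
    k ∈ A ↔ (k : ℕ) < α := by
  constructor
  · intro hk
    have hsub : Finset.Iic k ⊆ A := fun l hl => hdc k hk l (Finset.mem_Iic.mp hl)
    have h1 := Finset.card_le_card hsub
    rw [hcard, Fin.card_Iic] at h1
    omega
  · intro hk
    by_contra hkA
    have hsub : A ⊆ Finset.Iio k := by
      intro a ha
      rw [Finset.mem_Iio]
      by_contra h
      exact hkA (hdc a ha k (le_of_not_gt h))
    have h1 := Finset.card_le_card hsub
    rw [hcard, Fin.card_Iio] at h1
    omega

variable {Λ m : ℕ}

/-- Positions occupied by elements of `W` under the permutation `p`. -/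
def Ppos (W : Finset (Fin Λ)) (p : Equiv.Perm (Fin Λ)) : Finset (Fin Λ) :=
  W.image p.symm

lemma mem_Ppos {W : Finset (Fin Λ)} {p : Equiv.Perm (Fin Λ)} {k : Fin Λ} :
    k ∈ Ppos W p ↔ p k ∈ W := by
  constructor
  · rintro hk
    rcases Finset.mem_image.mp hk with ⟨w, hw, rfl⟩
    simpa using hw
  · intro h
    exact Finset.mem_image.mpr ⟨p k, h, by simp⟩

lemma Ppos_card (W : Finset (Fin Λ)) (hW : W.card = m) (p : Equiv.Perm (Fin Λ)) :
    (Ppos W p).card = m := by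
  rw [Ppos, Finset.card_image_of_injective _ p.symm.injective, hW]

/-- The increasing enumeration of the positions of `W` under `p`. -/
def sfun (W : Finset (Fin Λ)) (hW : W.card = m) (p : Equiv.Perm (Fin Λ)) : Fin m ↪o Fin Λ :=
  (Ppos W p).orderEmbOfFin (Ppos_card W hW p)

lemma sfun_mem_Ppos (W : Finset (Fin Λ)) (hW : W.card = m) (p : Equiv.Perm (Fin Λ)) (k : Fin m) :
    sfun W hW p k ∈ Ppos W p := Finset.orderEmbOfFin_mem _ _ _

lemma sfun_mem (W : Finset (Fin Λ)) (hW : W.card = m) (p : Equiv.Perm (Fin Λ)) (k : Fin m) :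
    p (sfun W hW p k) ∈ W := mem_Ppos.mp (sfun_mem_Ppos W hW p k)

lemma sfun_surj (W : Finset (Fin Λ)) (hW : W.card = m) (p : Equiv.Perm (Fin Λ)) {x : Fin Λ}
    (hx : x ∈ Ppos W p) : ∃ k : Fin m, sfun W hW p k = x := by
  have h : x ∈ Set.range ⇑(sfun W hW p) := by
    rw [sfun, Finset.range_orderEmbOfFin]
    exact_mod_cast hx
  exact h

/-- The pattern of `p` : the bijection from `Fin m` to `W` given by reading off,
in increasing position order, which element of `W` sits at each `W`-position. -/
def Rfun (W : Finset (Fin Λ)) (hW : W.card = m) (p : Equiv.Perm (Fin Λ)) :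
    Fin m → {x // x ∈ W} :=
  fun k => ⟨p (sfun W hW p k), sfun_mem W hW p k⟩

lemma Rfun_bijective (W : Finset (Fin Λ)) (hW : W.card = m) (p : Equiv.Perm (Fin Λ)) :
    Function.Bijective (Rfun W hW p) := by
  have hinj : Function.Injective (Rfun W hW p) := by
    intro a b hab
    have := congrArg Subtype.val hab
    exact (sfun W hW p).injective (p.injective this)
  rw [Fintype.bijective_iff_injective_and_card]
  refine ⟨hinj, ?_⟩
  simp [Fintype.card_coe, hW]

noncomputable def Rb (W : Finset (Fin Λ)) (hW : W.card = m) (p : Equiv.Perm (Fin Λ)) :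
    Fin m ≃ {x // x ∈ W} :=
  Equiv.ofBijective _ (Rfun_bijective W hW p)

lemma Rb_apply (W : Finset (Fin Λ)) (hW : W.card = m) (p : Equiv.Perm (Fin Λ)) (k : Fin m) :
    (Rb W hW p k : Fin Λ) = p (sfun W hW p k) := rfl

lemma ofSubtype_mem_iff (W : Finset (Fin Λ)) (σ : Equiv.Perm {x // x ∈ W}) (x : Fin Λ) :
    Equiv.Perm.ofSubtype σ x ∈ W ↔ x ∈ W := by
  constructor
  · intro h
    by_contra hx
    rw [Equiv.Perm.ofSubtype_apply_of_not_mem σ hx] at h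
    exact hx h
  · intro h
    rw [Equiv.Perm.ofSubtype_apply_of_mem σ h]
    exact (σ ⟨x, h⟩).2

lemma Ppos_mul (W : Finset (Fin Λ)) (σ : Equiv.Perm {x // x ∈ W}) (p : Equiv.Perm (Fin Λ)) :
    Ppos W (Equiv.Perm.ofSubtype σ * p) = Ppos W p := by
  ext k
  rw [mem_Ppos, mem_Ppos]
  exact ofSubtype_mem_iff W σ (p k)

lemma sfun_mul (W : Finset (Fin Λ)) (hW : W.card = m) (σ : Equiv.Perm {x // x ∈ W})
    (p : Equiv.Perm (Fin Λ)) :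
    sfun W hW (Equiv.Perm.ofSubtype σ * p) = sfun W hW p := by
  refine Finset.orderEmbOfFin_unique' _ (fun k => ?_)
  rw [← Ppos_mul W σ p]
  exact sfun_mem_Ppos W hW _ k

lemma Rb_mul (W : Finset (Fin Λ)) (hW : W.card = m) (σ : Equiv.Perm {x // x ∈ W})
    (p : Equiv.Perm (Fin Λ)) (k : Fin m) :
    Rb W hW (Equiv.Perm.ofSubtype σ * p) k = σ (Rb W hW p k) := by
  apply Subtype.ext
  rw [Rb_apply, sfun_mul, Equiv.Perm.mul_apply,
    Equiv.Perm.ofSubtype_apply_of_mem σ (sfun_mem W hW p k)]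
  rfl

/-- The fiber of the pattern map over a pattern `b`. -/
noncomputable def Fib (W : Finset (Fin Λ)) (hW : W.card = m) (b : Fin m ≃ {x // x ∈ W}) :
    Finset (Equiv.Perm (Fin Λ)) :=
  Finset.univ.filter (fun p => Rb W hW p = b)

lemma Fib_card_eq (W : Finset (Fin Λ)) (hW : W.card = m) (b₁ b₂ : Fin m ≃ {x // x ∈ W}) :
    (Fib W hW b₁).card = (Fib W hW b₂).card := by
  have key : ∀ b b' : Fin m ≃ {x // x ∈ W}, ∀ p ∈ Fib W hW b,
      Equiv.Perm.ofSubtype ((b.symm.trans b' : {x // x ∈ W} ≃ {x // x ∈ W}) : Equiv.Perm {x // x ∈ W}) * p ∈ Fib W hW b' := by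
    intro b b' p hp
    rw [Fib, Finset.mem_filter] at hp ⊢
    refine ⟨Finset.mem_univ _, ?_⟩
    ext k
    rw [Rb_mul, hp.2]
    simp
  refine Finset.card_bij' (fun p _ => Equiv.Perm.ofSubtype (b₁.symm.trans b₂ : Equiv.Perm {x // x ∈ W}) * p)
    (fun p _ => Equiv.Perm.ofSubtype (b₂.symm.trans b₁ : Equiv.Perm {x // x ∈ W}) * p)
    (key b₁ b₂) (key b₂ b₁) ?_ ?_
  · intro p _
    rw [← mul_assoc, ← map_mul]
    rw [show ((b₂.symm.trans b₁ : Equiv.Perm {x // x ∈ W}) * (b₁.symm.trans b₂ : Equiv.Perm {x // x ∈ W})) = 1 by ext x; simp [Equiv.Perm.mul_apply], map_one, one_mul]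
  · intro p _
    rw [← mul_assoc, ← map_mul]
    rw [show ((b₁.symm.trans b₂ : Equiv.Perm {x // x ∈ W}) * (b₂.symm.trans b₁ : Equiv.Perm {x // x ∈ W})) = 1 by ext x; simp [Equiv.Perm.mul_apply], map_one, one_mul]

variable {α j : ℕ}

lemma good_iff_pattern (U T : Finset (Fin Λ)) (hUT : Disjoint U T) (hUcard : U.card = α)
    (hW : (U ∪ T).card = m) (p : Equiv.Perm (Fin Λ)) :
    (∀ u ∈ U, ∀ t ∈ T, p.symm u < p.symm t) ↔
      (∀ k : Fin m, (k : ℕ) < α ↔ ((Rb (U ∪ T) hW p k : Fin Λ) ∈ U)) := by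
  constructor
  · intro hgood k
    set W := U ∪ T with hWdef
    set A : Finset (Fin m) :=
      Finset.univ.filter (fun k => ((Rb W hW p k : Fin Λ) ∈ U)) with hA
    have hcard : A.card = α := by
      rw [← hUcard]
      apply Finset.card_bij (fun k _ => ((Rb W hW p k : Fin Λ)))
      · intro k hk
        exact (Finset.mem_filter.mp hk).2
      · intro a ha b hb hab
        exact (Rb W hW p).injective (Subtype.ext hab)
      · intro u hu
        refine ⟨(Rb W hW p).symm ⟨u, Finset.mem_union_left _ hu⟩, ?_, ?_⟩
        · rw [hA, Finset.mem_filter]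
          refine ⟨Finset.mem_univ _, ?_⟩
          rw [Equiv.apply_symm_apply]
          exact hu
        · rw [Equiv.apply_symm_apply]
    have hdc : ∀ k ∈ A, ∀ l : Fin m, l ≤ k → l ∈ A := by
      intro k hk l hl
      rw [hA, Finset.mem_filter] at hk ⊢
      refine ⟨Finset.mem_univ _, ?_⟩
      have hmemW : ((Rb W hW p l : Fin Λ)) ∈ W := (Rb W hW p l).2
      rcases Finset.mem_union.mp hmemW with h | h
      · exact h
      · exfalso
        have hlt := hgood _ hk.2 _ h
        rw [Rb_apply, Rb_apply, Equiv.symm_apply_apply, Equiv.symm_apply_apply] at hlt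
        exact absurd hlt (not_lt.mpr ((sfun W hW p).monotone hl))
    have hiff := downset_iff hcard hdc k
    exact ⟨fun h => (Finset.mem_filter.mp (hiff.mpr h)).2,
      fun h => hiff.mp (Finset.mem_filter.mpr ⟨Finset.mem_univ _, h⟩)⟩
  · intro hpat u hu t ht
    set W := U ∪ T with hWdef
    obtain ⟨ku, hku⟩ := sfun_surj W hW p (x := p.symm u)
      (mem_Ppos.mpr (by rw [Equiv.apply_symm_apply]; exact Finset.mem_union_left _ hu))
    obtain ⟨kt, hkt⟩ := sfun_surj W hW p (x := p.symm t)
      (mem_Ppos.mpr (by rw [Equiv.apply_symm_apply]; exact Finset.mem_union_right _ ht))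
    have h1 : ((ku : ℕ) < α) := (hpat ku).mpr (by
      rw [Rb_apply, hku, Equiv.apply_symm_apply]; exact hu)
    have h2 : ¬ ((kt : ℕ) < α) := by
      intro h
      have := (hpat kt).mp h
      rw [Rb_apply, hkt, Equiv.apply_symm_apply] at this
      exact (Finset.disjoint_right.mp hUT ht) this
    have hlt : ku < kt := by rw [Fin.lt_def]; omega
    rw [← hku, ← hkt]
    exact (sfun W hW p).strictMono hlt

variable {α j : ℕ}

/-- Gluing a bijection onto `U` and a bijection onto `T` into a map `Fin (α+j) → U ∪ T`. -/
def glue (U T : Finset (Fin Λ)) (e : (Fin α ≃ {x // x ∈ U}) × (Fin j ≃ {x // x ∈ T}))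
    (k : Fin (α + j)) : {x // x ∈ U ∪ T} :=
  if h : (k : ℕ) < α then
    ⟨(e.1 ⟨k, h⟩ : Fin Λ), Finset.mem_union_left _ (e.1 ⟨k, h⟩).2⟩
  else
    ⟨(e.2 ⟨(k : ℕ) - α, by have := k.2; omega⟩ : Fin Λ),
      Finset.mem_union_right _ (e.2 ⟨(k : ℕ) - α, by have := k.2; omega⟩).2⟩

lemma glue_val_pos (U T : Finset (Fin Λ)) (e : (Fin α ≃ {x // x ∈ U}) × (Fin j ≃ {x // x ∈ T}))
    (k : Fin (α + j)) (h : (k : ℕ) < α) :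
    ((glue U T e k : {x // x ∈ U ∪ T}) : Fin Λ) = (e.1 ⟨k, h⟩ : Fin Λ) := by
  simp only [glue, dif_pos h]

lemma glue_val_neg (U T : Finset (Fin Λ)) (e : (Fin α ≃ {x // x ∈ U}) × (Fin j ≃ {x // x ∈ T}))
    (k : Fin (α + j)) (h : ¬ ((k : ℕ) < α)) :
    ((glue U T e k : {x // x ∈ U ∪ T}) : Fin Λ) =
      (e.2 ⟨(k : ℕ) - α, by have := k.2; omega⟩ : Fin Λ) := by
  simp only [glue, dif_neg h]

lemma glue_bijective (U T : Finset (Fin Λ)) (hUT : Disjoint U T)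
    (e : (Fin α ≃ {x // x ∈ U}) × (Fin j ≃ {x // x ∈ T})) :
    Function.Bijective (glue U T e) := by
  constructor
  · intro a b hab
    have hval := congrArg Subtype.val hab
    by_cases ha : (a : ℕ) < α <;> by_cases hb : (b : ℕ) < α
    · rw [glue_val_pos U T e a ha, glue_val_pos U T e b hb] at hval
      have h2 := congrArg Fin.val (e.1.injective (Subtype.ext hval))
      exact Fin.ext (by simpa using h2)
    · rw [glue_val_pos U T e a ha, glue_val_neg U T e b hb] at hval
      have h1 : (e.1 ⟨a, ha⟩ : Fin Λ) ∈ U := (e.1 ⟨a, ha⟩).2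
      rw [hval] at h1
      exact absurd h1 (Finset.disjoint_right.mp hUT (e.2 _).2)
    · rw [glue_val_neg U T e a ha, glue_val_pos U T e b hb] at hval
      have h1 : (e.1 ⟨b, hb⟩ : Fin Λ) ∈ U := (e.1 ⟨b, hb⟩).2
      rw [← hval] at h1
      exact absurd h1 (Finset.disjoint_right.mp hUT (e.2 _).2)
    · rw [glue_val_neg U T e a ha, glue_val_neg U T e b hb] at hval
      have h2 := congrArg Fin.val (e.2.injective (Subtype.ext hval))
      simp only at h2
      have := a.2; have := b.2
      exact Fin.ext (by omega)
  · rintro ⟨w, hw⟩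
    rcases Finset.mem_union.mp hw with h | h
    · have hlt : ((e.1.symm ⟨w, h⟩ : Fin α) : ℕ) < α + j :=
        lt_of_lt_of_le (e.1.symm ⟨w, h⟩).2 (Nat.le_add_right α j)
      refine ⟨⟨((e.1.symm ⟨w, h⟩ : Fin α) : ℕ), hlt⟩, ?_⟩
      apply Subtype.ext
      rw [glue_val_pos U T e _ (e.1.symm ⟨w, h⟩).2]
      have h3 : (⟨((e.1.symm ⟨w, h⟩ : Fin α) : ℕ), (e.1.symm ⟨w, h⟩).2⟩ : Fin α) =
          e.1.symm ⟨w, h⟩ := Fin.ext rfl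
      rw [h3, Equiv.apply_symm_apply]
    · have hlt : α + ((e.2.symm ⟨w, h⟩ : Fin j) : ℕ) < α + j :=
        Nat.add_lt_add_left (e.2.symm ⟨w, h⟩).2 α
      refine ⟨⟨α + ((e.2.symm ⟨w, h⟩ : Fin j) : ℕ), hlt⟩, ?_⟩
      apply Subtype.ext
      rw [glue_val_neg U T e _ (by simp only [Fin.val_mk]; omega)]
      have h3 : (⟨((⟨α + ((e.2.symm ⟨w, h⟩ : Fin j) : ℕ), hlt⟩ : Fin (α + j)) : ℕ) - α,
          by simp only [Fin.val_mk]; have := (e.2.symm ⟨w, h⟩).2; omega⟩ :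
          Fin j) = e.2.symm ⟨w, h⟩ := Fin.ext (by simp only [Fin.val_mk]; omega)
      rw [h3, Equiv.apply_symm_apply]

lemma G_card (U T : Finset (Fin Λ)) (hUT : Disjoint U T) (hU : U.card = α) (hT : T.card = j) :
    (Finset.univ.filter (fun b : Fin (α + j) ≃ {x // x ∈ U ∪ T} =>
      ∀ k : Fin (α + j), (k : ℕ) < α ↔ ((b k : Fin Λ) ∈ U))).card =
      Nat.factorial α * Nat.factorial j := by
  classical
  have hgprop : ∀ e, ∀ k : Fin (α + j),
      (k : ℕ) < α ↔ ((glue U T e k : Fin Λ) ∈ U) := by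
    intro e k
    constructor
    · intro h
      rw [glue_val_pos U T e k h]
      exact (e.1 ⟨k, h⟩).2
    · intro h
      by_contra hk
      rw [glue_val_neg U T e k hk] at h
      exact (Finset.disjoint_right.mp hUT (e.2 _).2) h
  set Θ : ((Fin α ≃ {x // x ∈ U}) × (Fin j ≃ {x // x ∈ T})) →
      {b : Fin (α + j) ≃ {x // x ∈ U ∪ T} //
        ∀ k : Fin (α + j), (k : ℕ) < α ↔ ((b k : Fin Λ) ∈ U)} :=
    fun e => ⟨Equiv.ofBijective (glue U T e) (glue_bijective U T hUT e), hgprop e⟩ with hΘ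
  have hΘbij : Function.Bijective Θ := by
    constructor
    · intro e f hef
      have hfun : ∀ k, glue U T e k = glue U T f k := by
        intro k
        have h0 := congrArg (fun q => q.1 k) hef
        simpa [hΘ] using h0
      refine Prod.ext ?_ ?_
      · apply Equiv.ext
        intro k
        have h := congrArg Subtype.val
          (hfun ⟨(k : ℕ), lt_of_lt_of_le k.2 (Nat.le_add_right α j)⟩)
        rw [glue_val_pos U T e _ k.2, glue_val_pos U T f _ k.2] at h
        have h2 : (⟨(k : ℕ), k.2⟩ : Fin α) = k := Fin.ext rfl
        rw [h2] at h
        exact Subtype.ext h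
      · apply Equiv.ext
        intro k
        have h := congrArg Subtype.val
          (hfun ⟨α + (k : ℕ), Nat.add_lt_add_left k.2 α⟩)
        rw [glue_val_neg U T e _ (by simp only [Fin.val_mk]; omega),
          glue_val_neg U T f _ (by simp only [Fin.val_mk]; omega)] at h
        have h2 : ∀ (hpf : ((⟨α + (k : ℕ), Nat.add_lt_add_left k.2 α⟩ : Fin (α + j)) : ℕ) - α < j),
            (⟨((⟨α + (k : ℕ), Nat.add_lt_add_left k.2 α⟩ : Fin (α + j)) : ℕ) - α, hpf⟩ : Fin j)
            = k := fun hpf => Fin.ext (by simp only [Fin.val_mk]; omega)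
        rw [h2] at h
        exact Subtype.ext h
    · rintro ⟨b, hb⟩
      have h1bij : Function.Bijective (fun k : Fin α =>
          (⟨(b (Fin.castAdd j k) : Fin Λ), (hb (Fin.castAdd j k)).mp (by simpa using k.2)⟩ :
            {x // x ∈ U})) := by
        rw [Fintype.bijective_iff_injective_and_card]
        constructor
        · intro a c hac
          have hv : (b (Fin.castAdd j a) : Fin Λ) = (b (Fin.castAdd j c) : Fin Λ) := by
            have := congrArg Subtype.val hac
            simpa using this
          have h0 := b.injective (Subtype.ext hv)
          have h1 := congrArg Fin.val h0
          exact Fin.ext (by simpa using h1)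
        · simp [Fintype.card_coe, hU]
      have hTm : ∀ k : Fin j, (b (Fin.natAdd α k) : Fin Λ) ∈ T := by
        intro k
        have hmem : (b (Fin.natAdd α k) : Fin Λ) ∈ U ∪ T := (b (Fin.natAdd α k)).2
        rcases Finset.mem_union.mp hmem with h | h
        · exfalso
          have := (hb (Fin.natAdd α k)).mpr h
          simp at this
        · exact h
      have h2bij : Function.Bijective (fun k : Fin j =>
          (⟨(b (Fin.natAdd α k) : Fin Λ), hTm k⟩ : {x // x ∈ T})) := by
        rw [Fintype.bijective_iff_injective_and_card]
        constructor
        · intro a c hac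
          have hv : (b (Fin.natAdd α a) : Fin Λ) = (b (Fin.natAdd α c) : Fin Λ) := by
            have := congrArg Subtype.val hac
            simpa using this
          have h0 := b.injective (Subtype.ext hv)
          have h1 := congrArg Fin.val h0
          exact Fin.ext (by simpa using h1)
        · simp [Fintype.card_coe, hT]
      refine ⟨(Equiv.ofBijective _ h1bij, Equiv.ofBijective _ h2bij), ?_⟩
      apply Subtype.ext
      apply Equiv.ext
      intro k
      apply Subtype.ext
      show ((glue U T _ k : {x // x ∈ U ∪ T}) : Fin Λ) = (b k : Fin Λ)
      by_cases h : (k : ℕ) < α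
      · rw [glue_val_pos _ _ _ k h]
        show (b (Fin.castAdd j ⟨(k : ℕ), h⟩) : Fin Λ) = _
        have h2 : Fin.castAdd j (⟨(k : ℕ), h⟩ : Fin α) = k := Fin.ext (by simp)
        rw [h2]
      · rw [glue_val_neg _ _ _ k h]
        show (b (Fin.natAdd α ⟨(k : ℕ) - α, _⟩) : Fin Λ) = _
        have h2 : Fin.natAdd α (⟨(k : ℕ) - α, by have := k.2; omega⟩ : Fin j) = k :=
          Fin.ext (by simp; omega)
        rw [h2]
  have hcards := Fintype.card_of_bijective hΘbij
  rw [Fintype.card_subtype] at hcards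
  rw [← hcards, Fintype.card_prod,
    Fintype.card_equiv (Fintype.equivOfCardEq (by simp [Fintype.card_coe, hU]) : Fin α ≃ {x // x ∈ U}),
    Fintype.card_equiv (Fintype.equivOfCardEq (by simp [Fintype.card_coe, hT]) : Fin j ≃ {x // x ∈ T})]
  simp

lemma count_good (Λ α j : ℕ) (T U : Finset (Fin Λ)) (hT : T.card = j) (hU : U.card = α)
    (hUT : Disjoint U T) :
    (Finset.univ.filter (fun p : Equiv.Perm (Fin Λ) =>
        ∀ u ∈ U, ∀ t ∈ T, p.symm u < p.symm t)).card =
      Nat.factorial α * Nat.factorial j * Nat.factorial (Λ - α - j) *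
        Nat.choose Λ (α + j) := by
  have hW : (U ∪ T).card = α + j := by
    rw [Finset.card_union_of_disjoint hUT, hU, hT]
  have hm : α + j ≤ Λ := by
    have h0 := Finset.card_le_univ (U ∪ T)
    rw [hW] at h0
    simpa using h0
  obtain ⟨b₀⟩ : Nonempty (Fin (α + j) ≃ {x // x ∈ U ∪ T}) :=
    ⟨Fintype.equivOfCardEq (by rw [Fintype.card_fin, Fintype.card_coe, hW])⟩
  set c := (Fib (U ∪ T) hW b₀).card with hc
  have hfib : ∀ b, (Fib (U ∪ T) hW b).card = c := fun b => Fib_card_eq (U ∪ T) hW b b₀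
  -- total count over all fibers
  have htot : Nat.factorial Λ = Nat.factorial (α + j) * c := by
    have h1 : (Finset.univ : Finset (Equiv.Perm (Fin Λ))).card =
        ∑ b ∈ (Finset.univ : Finset (Fin (α + j) ≃ {x // x ∈ U ∪ T})),
          (Finset.univ.filter (fun p => Rb (U ∪ T) hW p = b)).card :=
      Finset.card_eq_sum_card_fiberwise (fun p _ => Finset.mem_univ _)
    rw [Finset.card_univ, Fintype.card_perm, Fintype.card_fin] at h1
    rw [h1]
    have h2 : ∀ b ∈ (Finset.univ : Finset (Fin (α + j) ≃ {x // x ∈ U ∪ T})),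
        (Finset.univ.filter (fun p => Rb (U ∪ T) hW p = b)).card = c := fun b _ => hfib b
    rw [Finset.sum_congr rfl h2, Finset.sum_const, smul_eq_mul, Finset.card_univ,
      Fintype.card_equiv (Fintype.equivOfCardEq (by rw [Fintype.card_fin, Fintype.card_coe, hW]) :
        Fin (α + j) ≃ {x // x ∈ U ∪ T}), Fintype.card_fin]
  -- count over good fibers
  have hgood : (Finset.univ.filter (fun p : Equiv.Perm (Fin Λ) =>
      ∀ u ∈ U, ∀ t ∈ T, p.symm u < p.symm t)).card =
      Nat.factorial α * Nat.factorial j * c := by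
    set G := (Finset.univ.filter (fun b : Fin (α + j) ≃ {x // x ∈ U ∪ T} =>
      ∀ k : Fin (α + j), (k : ℕ) < α ↔ ((b k : Fin Λ) ∈ U))) with hG
    have h1 : (Finset.univ.filter (fun p : Equiv.Perm (Fin Λ) =>
        ∀ u ∈ U, ∀ t ∈ T, p.symm u < p.symm t)).card =
        ∑ b ∈ G, ((Finset.univ.filter (fun p : Equiv.Perm (Fin Λ) =>
          ∀ u ∈ U, ∀ t ∈ T, p.symm u < p.symm t)).filter
            (fun p => Rb (U ∪ T) hW p = b)).card := by
      apply Finset.card_eq_sum_card_fiberwise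
      intro p hp
      rw [hG, Finset.mem_coe, Finset.mem_filter]
      refine ⟨Finset.mem_univ _, ?_⟩
      exact (good_iff_pattern U T hUT hU hW p).mp (Finset.mem_filter.mp (Finset.mem_coe.mp hp)).2
    rw [h1]
    have h2 : ∀ b ∈ G, ((Finset.univ.filter (fun p : Equiv.Perm (Fin Λ) =>
        ∀ u ∈ U, ∀ t ∈ T, p.symm u < p.symm t)).filter
          (fun p => Rb (U ∪ T) hW p = b)).card = c := by
      intro b hb
      rw [← hfib b]
      congr 1
      ext p
      rw [Finset.filter_filter, Fib, Finset.mem_filter, Finset.mem_filter]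
      constructor
      · rintro ⟨h3, _, h5⟩
        exact ⟨h3, h5⟩
      · rintro ⟨h3, h5⟩
        refine ⟨h3, ?_, h5⟩
        apply (good_iff_pattern U T hUT hU hW p).mpr
        rw [h5]
        exact (Finset.mem_filter.mp hb).2
    rw [Finset.sum_congr rfl h2, Finset.sum_const, smul_eq_mul, G_card U T hUT hU hT]
  rw [hgood]
  have hsuff : c = Nat.factorial (Λ - α - j) * Nat.choose Λ (α + j) := by
    apply Nat.eq_of_mul_eq_mul_left (Nat.factorial_pos (α + j))
    rw [← htot]
    have key := Nat.choose_mul_factorial_mul_factorial hm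
    rw [Nat.sub_sub, ← key]
    ring
  rw [hsuff]
  ring

theorem stmt_17 (Λ α j : ℕ) (hΛ : 1 ≤ Λ) (hα : 1 ≤ α) (hαΛ : α ≤ Λ)
    (T U : Finset (Fin Λ)) (hT : T.card = j) (hU : U.card = α)
    (hUT : Disjoint U T) :
    Set.ncard {p : Equiv.Perm (Fin Λ) × ℕ |
        p.2 ∈ Finset.Icc α Λ ∧
        (∀ u ∈ U, ∃ k : Fin Λ, (k : ℕ) < p.2 ∧ p.1 k = u) ∧
        (∃ k : Fin Λ, (k : ℕ) + 1 = p.2 ∧ p.1 k ∈ U) ∧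
        (∀ t ∈ T, ∀ k : Fin Λ, (k : ℕ) < p.2 → p.1 k ≠ t)} =
      Nat.factorial α * Nat.factorial j * Nat.factorial (Λ - α - j) *
        Nat.choose Λ (α + j) := by
  have hUne : U.Nonempty := Finset.card_pos.mp (by omega)
  set GoodS : Set (Equiv.Perm (Fin Λ)) :=
    {p | ∀ u ∈ U, ∀ t ∈ T, p.symm u < p.symm t} with hGoodS
  set f : Equiv.Perm (Fin Λ) → Equiv.Perm (Fin Λ) × ℕ :=
    fun p => (p, ((U.image p.symm).max' (hUne.image _)).val + 1) with hf
  have hseteq : {p : Equiv.Perm (Fin Λ) × ℕ |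
        p.2 ∈ Finset.Icc α Λ ∧
        (∀ u ∈ U, ∃ k : Fin Λ, (k : ℕ) < p.2 ∧ p.1 k = u) ∧
        (∃ k : Fin Λ, (k : ℕ) + 1 = p.2 ∧ p.1 k ∈ U) ∧
        (∀ t ∈ T, ∀ k : Fin Λ, (k : ℕ) < p.2 → p.1 k ≠ t)} = f '' GoodS := by
    ext ⟨p, i⟩
    simp only [Set.mem_setOf_eq, Set.mem_image, hGoodS, hf]
    constructor
    · rintro ⟨h1, h2, h3, h4⟩
      refine ⟨p, ?_, ?_⟩
      · intro u hu t ht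
        obtain ⟨k, hk1, hk2⟩ := h2 u hu
        have hku : p.symm u = k := by rw [← hk2, Equiv.symm_apply_apply]
        have hts : ¬ ((p.symm t : ℕ) < i) := by
          intro hcon
          exact h4 t ht (p.symm t) hcon (Equiv.apply_symm_apply p t)
        rw [Fin.lt_def, hku]
        omega
      · obtain ⟨k, hk1, hk2⟩ := h3
        have hkmem : k ∈ U.image p.symm :=
          Finset.mem_image.mpr ⟨p k, hk2, Equiv.symm_apply_apply p k⟩
        have hkM := Fin.le_def.mp (Finset.le_max' _ _ hkmem)
        obtain ⟨u, hu, hMu⟩ :=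
          Finset.mem_image.mp ((U.image p.symm).max'_mem (hUne.image _))
        obtain ⟨k', hk'1, hk'2⟩ := h2 u hu
        have hk'u : p.symm u = k' := by rw [← hk'2, Equiv.symm_apply_apply]
        have hMlt : (((U.image p.symm).max' (hUne.image _)) : ℕ) < i := by
          rw [← hMu, hk'u]
          exact hk'1
        simp only [Prod.mk.injEq]
        exact ⟨trivial, by omega⟩
    · rintro ⟨p', hp', heq⟩
      have hp2 : p' = p := congrArg Prod.fst heq
      subst hp2
      have hi : ((U.image p'.symm).max' (hUne.image _)).val + 1 = i := congrArg Prod.snd heq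
      subst hi
      set M := (U.image p'.symm).max' (hUne.image _) with hM
      obtain ⟨u₀, hu₀, hMu₀⟩ := Finset.mem_image.mp ((U.image p'.symm).max'_mem (hUne.image _))
      refine ⟨?_, ?_, ?_, ?_⟩
      · rw [Finset.mem_Icc]
        constructor
        · have himg : (U.image p'.symm).card = α := by
            rw [Finset.card_image_of_injective _ p'.symm.injective, hU]
          have hsub : U.image p'.symm ⊆ Finset.Iic M :=
            fun x hx => Finset.mem_Iic.mpr (Finset.le_max' _ _ hx)
          have hcl := Finset.card_le_card hsub
          rw [himg, Fin.card_Iic] at hcl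
          omega
        · have := M.isLt
          omega
      · intro u hu
        refine ⟨p'.symm u, ?_, Equiv.apply_symm_apply p' u⟩
        have hmem : p'.symm u ∈ U.image p'.symm :=
          Finset.mem_image.mpr ⟨u, hu, rfl⟩
        have := Fin.le_def.mp (Finset.le_max' _ _ hmem)
        omega
      · refine ⟨M, rfl, ?_⟩
        rw [hM, ← hMu₀, Equiv.apply_symm_apply]
        exact hu₀
      · intro t ht k hk hcon
        have hkt : p'.symm t = k := by rw [← hcon, Equiv.symm_apply_apply]
        have hgood := hp' u₀ hu₀ t ht
        rw [Fin.lt_def, hMu₀, ← hM, hkt] at hgood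
        omega
  rw [hseteq]
  have hfinj : Function.Injective f := by
    intro a b h
    exact congrArg Prod.fst h
  rw [Set.ncard_image_of_injective _ hfinj]
  have hcoe : GoodS = ↑(Finset.univ.filter (fun p : Equiv.Perm (Fin Λ) =>
      ∀ u ∈ U, ∀ t ∈ T, p.symm u < p.symm t)) := by
    ext p
    simp [hGoodS]
  rw [hcoe, Set.ncard_coe_finset, count_good Λ α j T U hT hU hUT]
end
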